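/- Let F be an algebraic closure of 𝔽₃ and R = F[ε] the ring of dual numbers over F. Let E₁ and E₂ be the Weierstrass curves over R defined by y² = x³ + x² + x + (1 + ε) and y² = x³ + x² + x + (1 − ε). Then the base changes of E₁ and E₂ along the augmentation R → F, ε ↦ 0, both equal the Weierstrass curve E : y² = x³ + x² + x + 1 over F; nevertheless, E₁ and E₂ are not isomorphic over R: there is no admissible change of variables (u, r, s, t) over R with u a unit of R carrying E₁ to E₂. -/

import Mathlib

/-- `F` is an algebraic closure of `𝔽₃`. -/
abbrev F : Type := AlgebraicClosure (ZMod 3)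

/-- The Weierstrass curve `E₁ : y² = x³ + x² + x + (1 + ε)` over the dual numbers `F[ε]`. -/
noncomputable def E₁ : WeierstrassCurve (DualNumber F) :=
  { a₁ := 0, a₂ := 1, a₃ := 0, a₄ := 1, a₆ := 1 + DualNumber.eps }

/-- The Weierstrass curve `E₂ : y² = x³ + x² + x + (1 − ε)` over the dual numbers `F[ε]`. -/
noncomputable def E₂ : WeierstrassCurve (DualNumber F) :=
  { a₁ := 0, a₂ := 1, a₃ := 0, a₄ := 1, a₆ := 1 - DualNumber.eps }

/-- The Weierstrass curve `E : y² = x³ + x² + x + 1` over `F`. -/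
noncomputable def E : WeierstrassCurve F :=
  { a₁ := 0, a₂ := 1, a₃ := 0, a₄ := 1, a₆ := 1 }

/-- The augmentation `F[ε] → F`, `ε ↦ 0`. -/
noncomputable def aug : DualNumber F →+* F where
  toFun := TrivSqZeroExt.fst
  map_one' := TrivSqZeroExt.fst_one (R := F) (M := F)
  map_mul' x y := TrivSqZeroExt.fst_mul x y
  map_zero' := TrivSqZeroExt.fst_zero (R := F) (M := F)
  map_add' x y := TrivSqZeroExt.fst_add x y

lemma three_eq_zero : (3 : DualNumber F) = 0 := by
  have h : ((3:ℕ) : DualNumber F) = TrivSqZeroExt.inl ((3:ℕ) : F) :=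
    (TrivSqZeroExt.inl_natCast 3).symm
  have h2 : (3 : F) = 0 := CharP.cast_eq_zero F 3
  push_cast at h
  rw [h, h2, TrivSqZeroExt.inl_zero]

lemma eps_ne_zero : DualNumber.eps (R := F) ≠ 0 :=
  fun h => (one_ne_zero (α := F)) (by simpa using congrArg TrivSqZeroExt.snd h)

set_option maxHeartbeats 1000000 in
/-- The base changes of `E₁` and `E₂` along the augmentation `F[ε] → F`, `ε ↦ 0`, both equal
`E`; nevertheless no admissible change of variables over `F[ε]` carries `E₁` to `E₂`. -/
theorem stmt7 :
    E₁.map aug = E ∧ E₂.map aug = E ∧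
      ∀ C : WeierstrassCurve.VariableChange (DualNumber F), C • E₁ ≠ E₂ := by
  have h3 := three_eq_zero
  refine ⟨?_, ?_, ?_⟩
  · refine WeierstrassCurve.ext ?_ ?_ ?_ ?_ ?_ <;>
      simp only [WeierstrassCurve.map_a₁, WeierstrassCurve.map_a₂, WeierstrassCurve.map_a₃,
        WeierstrassCurve.map_a₄, WeierstrassCurve.map_a₆, E₁, E]
    · exact map_zero aug
    · exact map_one aug
    · exact map_zero aug
    · exact map_one aug
    · rw [show aug (1 + DualNumber.eps) = aug 1 + aug DualNumber.eps from
        TrivSqZeroExt.fst_add _ _, map_one aug,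
        show aug DualNumber.eps = 0 from TrivSqZeroExt.fst_inr F 1, add_zero]
  · refine WeierstrassCurve.ext ?_ ?_ ?_ ?_ ?_ <;>
      simp only [WeierstrassCurve.map_a₁, WeierstrassCurve.map_a₂, WeierstrassCurve.map_a₃,
        WeierstrassCurve.map_a₄, WeierstrassCurve.map_a₆, E₂, E]
    · exact map_zero aug
    · exact map_one aug
    · exact map_zero aug
    · exact map_one aug
    · rw [show aug (1 - DualNumber.eps) = aug 1 - aug DualNumber.eps from
        TrivSqZeroExt.fst_sub _ _, map_one aug,
        show aug DualNumber.eps = 0 from TrivSqZeroExt.fst_inr F 1, sub_zero]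
  · intro C h
    set v : DualNumber F := ↑C.u⁻¹ with hv_def
    have h1 := congrArg WeierstrassCurve.a₁ h
    have h2 := congrArg WeierstrassCurve.a₂ h
    have h4 := congrArg WeierstrassCurve.a₃ h
    have h5 := congrArg WeierstrassCurve.a₄ h
    have h6 := congrArg WeierstrassCurve.a₆ h
    simp only [E₁, E₂, WeierstrassCurve.variableChange_a₁, WeierstrassCurve.variableChange_a₂,
      WeierstrassCurve.variableChange_a₃, WeierstrassCurve.variableChange_a₄,
      WeierstrassCurve.variableChange_a₆] at h1 h2 h4 h5 h6
    have hs : C.s = 0 := by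
      have h1' := (Units.mul_right_eq_zero C.u⁻¹).mp h1
      linear_combination 2*h1' - C.s*h3
    have ht : C.t = 0 := by
      rw [← hv_def, show v^3 = ↑(C.u⁻¹^3) from (Units.val_pow_eq_pow_val _ _).symm] at h4
      have h4' := (Units.mul_right_eq_zero _).mp h4
      linear_combination 2*h4' - C.t*h3
    have hu : v^2 = 1 := by
      rw [hs] at h2
      linear_combination h2 - v^2*C.r*h3
    have hr : C.r = 0 := by
      rw [hs, ht] at h5
      linear_combination 2*h5 + ((v^2+1)*(1-C.r))*hu + (1 - 2*v^4*C.r^2 - v^4 - C.r*v^4)*h3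
    rw [ht, hr] at h6
    have heps : (DualNumber.eps : DualNumber F) = 0 := by
      linear_combination 2*h6 + (-2*(v^4+v^2+1)*(1+DualNumber.eps))*hu + (-DualNumber.eps)*h3
    exact eps_ne_zero heps
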